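/- arXiv:1510.05051 — 3 statements merged into one kernel-verified Lean document; each statement's English description precedes it below -/
import Mathlib

section
/- Let a, b be real numbers and λ = ρ e^{iφ} a complex number with ρ > 0, φ ∈ (-π, π), and b ≥ 0. Then |1 - i√(2λ) a + 2λ b|^{-1} ≤ 1/cos(φ/2), where √λ denotes the principal square root. -/
open Complex Real

open ComplexConjugate

/-! With `w = (2λ)^(1/2)` we have `2λ = w²`, `arg w = φ/2` and `Re w ≥ 0`. Multiplying
`z = 1 - i a w + b w²` by `w̄` makes the `a`-term purely imaginary, so
`Re (z w̄) = Re w (1 + b |w|²) ≥ Re w`, whence `‖z‖ ≥ Re w / ‖w‖ = cos (φ/2)`. -/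

namespace Complex

lemma re_mul_conj_one_sub_I_mul_add_sq_mul (w : ℂ) (a b : ℝ) :
    ((1 - I * w * a + w ^ 2 * b) * conj w).re = w.re * (1 + b * ‖w‖ ^ 2) := by
  rw [← normSq_eq_norm_sq, normSq_apply]
  simp only [mul_re, mul_im, sub_re, sub_im, add_re, add_im, one_re, one_im, I_re, I_im,
    ofReal_re, ofReal_im, conj_re, conj_im, pow_two]
  ring

lemma re_le_norm_one_sub_I_mul_add_sq_mul_mul_norm {w : ℂ} (hw : 0 ≤ w.re) (a : ℝ) {b : ℝ}
    (hb : 0 ≤ b) : w.re ≤ ‖1 - I * w * a + w ^ 2 * b‖ * ‖w‖ :=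
  calc w.re ≤ w.re * (1 + b * ‖w‖ ^ 2) :=
        le_mul_of_one_le_right hw (le_add_of_nonneg_right (by positivity))
    _ = ((1 - I * w * a + w ^ 2 * b) * conj w).re :=
        (re_mul_conj_one_sub_I_mul_add_sq_mul w a b).symm
    _ ≤ ‖(1 - I * w * a + w ^ 2 * b) * conj w‖ := re_le_norm _
    _ = ‖1 - I * w * a + w ^ 2 * b‖ * ‖w‖ := by rw [norm_mul, norm_conj]

lemma cos_arg_le_norm_one_sub_I_mul_add_sq_mul {w : ℂ} (hw₀ : w ≠ 0) (hw : 0 ≤ w.re) (a : ℝ)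
    {b : ℝ} (hb : 0 ≤ b) : Real.cos (arg w) ≤ ‖1 - I * w * a + w ^ 2 * b‖ := by
  rw [cos_arg hw₀, div_le_iff₀ (norm_pos_iff.mpr hw₀)]
  exact re_le_norm_one_sub_I_mul_add_sq_mul_mul_norm hw a hb

lemma arg_cpow_inv_two (x : ℂ) : arg (x ^ (2⁻¹ : ℂ)) = arg x / 2 := by
  rcases eq_or_ne x 0 with rfl | hx
  · simp
  have him : (log x * 2⁻¹).im = arg x / 2 := by simp [log_im, div_eq_mul_inv]
  rw [cpow_def_of_ne_zero hx, arg_exp, him, toIocMod_eq_self]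
  obtain ⟨h₁, h₂⟩ := arg_mem_Ioc x
  constructor <;> linarith [Real.pi_pos]

lemma arg_ofReal_mul_exp_mul_I {r : ℝ} (hr : 0 < r) {θ : ℝ} (hθ : θ ∈ Set.Ioc (-π) π) :
    arg (r * exp (θ * I)) = θ := by
  rw [arg_real_mul _ hr, arg_exp_mul_I, toIocMod_eq_self]
  simpa [two_mul] using hθ

end Complex

theorem resolvent_bound (a b ρ φ : ℝ) (hρ : 0 < ρ) (hφ : φ ∈ Set.Ioo (-Real.pi) Real.pi)
    (hb : 0 ≤ b) (lam : ℂ) (hlam : lam = (ρ : ℂ) * Complex.exp (Complex.I * (φ : ℂ))) :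
    ‖1 - Complex.I * (2 * lam) ^ ((1 : ℂ)/2) * (a : ℂ) + 2 * lam * (b : ℂ)‖⁻¹
      ≤ 1 / Real.cos (φ / 2) := by
  have h2lam : 2 * lam = ((2 * ρ : ℝ) : ℂ) * exp (φ * I) := by
    rw [hlam, mul_comm I]; push_cast; ring
  have hcos : 0 < Real.cos (φ / 2) :=
    Real.cos_pos_of_mem_Ioo ⟨by linarith [hφ.1], by linarith [hφ.2]⟩
  set w := (2 * lam) ^ ((1 : ℂ) / 2) with hw
  have hw_inv : w = (2 * lam) ^ (2⁻¹ : ℂ) := by rw [hw, one_div]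
  have hw_sq : w ^ 2 = 2 * lam := by
    rw [hw_inv]; exact_mod_cast cpow_nat_inv_pow (2 * lam) two_ne_zero
  have hw₀ : w ≠ 0 := by
    rw [← pow_ne_zero_iff two_ne_zero, hw_sq, h2lam]
    exact mul_ne_zero (ofReal_ne_zero.mpr (by positivity)) (exp_ne_zero _)
  have hw_re : 0 ≤ w.re := by rw [hw_inv, cpow_inv_two_re]; positivity
  have harg : arg w = φ / 2 := by
    rw [hw_inv, arg_cpow_inv_two, h2lam,
      arg_ofReal_mul_exp_mul_I (by positivity) ⟨hφ.1, hφ.2.le⟩]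
  rw [one_div, ← hw_sq]
  refine inv_anti₀ hcos ?_
  rw [← harg]
  exact cos_arg_le_norm_one_sub_I_mul_add_sq_mul hw₀ hw_re a hb
end

section
/- For every integer n ≥ 2, the number of labeled trees on n vertices with prescribed vertex degrees c_1, ..., c_n (each c_i ≥ 1, Σ c_i = 2n-2) is (n-2)! / Π_i (c_i - 1)!. -/
open Finset
open scoped Nat

/-!
Induction on the number `n` of vertices by removing a leaf. Since the degrees sum to
`2n - 2 < 2n`, some vertex `v` has degree one. Deleting it from a tree gives a tree on the other
`n - 1` vertices in which only the neighbour `w` of `v` has lost a degree, and conversely attaching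
`v` as a leaf to such a tree gives back a tree. So the number `T(c)` of trees with degrees `c`
is `∑_{w ≠ v} T(c - e_w)`, with `c - e_w` read on the vertices other than `v`. By induction
each term times `∏ (c x - 1)!` is `(c w - 1) * (n - 3)!` (both sides vanish when `c w = 1`, as a
tree on at least two vertices has no isolated vertex), and `∑_{w ≠ v} (c w - 1) = n - 2`.
-/

section Arithmetic

variable {ι : Type*} [Fintype ι]

lemma exists_eq_one_of_sum_lt {c : ι → ℕ} (hc : ∀ i, 1 ≤ c i)
    (hsum : ∑ i, c i < 2 * Fintype.card ι) : ∃ i, c i = 1 := by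
  by_contra! h
  have : ∑ _ : ι, 2 ≤ ∑ i, c i := sum_le_sum fun i _ => (hc i).lt_of_ne' (h i)
  rw [sum_const, card_univ, smul_eq_mul] at this
  omega

variable [DecidableEq ι]

lemma sum_update_pred_add_one (f : ι → ℕ) {i : ι} (hi : 1 ≤ f i) :
    ∑ j, Function.update f i (f i - 1) j + 1 = ∑ j, f j := by
  rw [Finset.sum_update_of_mem (mem_univ i), sum_eq_add_sum_sdiff_singleton_of_mem (mem_univ i)]
  omega

lemma prod_factorial_pred_update (f : ι → ℕ) {i : ι} (hi : 2 ≤ f i) :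
    ∏ j, (f j - 1)! = (f i - 1) * ∏ j, (Function.update f i (f i - 1) j - 1)! := by
  rw [prod_eq_mul_prod_sdiff_singleton_of_mem (mem_univ i),
    prod_eq_mul_prod_sdiff_singleton_of_mem (mem_univ i)
      fun j => (Function.update f i (f i - 1) j - 1)!,
    Function.update_self, ← mul_assoc, Nat.mul_factorial_pred (by omega)]
  congr 1
  refine prod_congr rfl fun j hj => ?_
  rw [Function.update_of_ne (by simpa using hj)]

end Arithmetic

namespace SimpleGraph

variable {V : Type*}

def treesWithDegrees (c : V → ℕ) : Set (SimpleGraph V) :=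
  {G | G.IsTree ∧ ∀ v, (G.neighborSet v).ncard = c v}

section Leaf

variable {G : SimpleGraph V} {v w : V}

lemma ncard_neighborSet_eq_ncard_neighborSet_induce_add [Finite V] [DecidableEq V]
    (hv : G.neighborSet v = {w}) (x : ({v}ᶜ : Set V)) :
    (G.neighborSet x).ncard =
      ((G.induce {v}ᶜ).neighborSet x).ncard + if (x : V) = w then 1 else 0 := by
  have hdiff : G.neighborSet x \ {v} = Subtype.val '' (G.induce {v}ᶜ).neighborSet x := by
    ext y
    simp [and_comm]
  rw [← Set.ncard_image_of_injective _ Subtype.val_injective, ← hdiff]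
  have hxv : G.Adj x v ↔ (x : V) = w := by
    rw [adj_comm, ← mem_neighborSet, hv, Set.mem_singleton_iff]
  split_ifs with hxw
  · exact (Set.ncard_sdiff_singleton_add_one (hxv.mpr hxw)).symm
  · rw [Set.sdiff_singleton_eq_self (show v ∉ G.neighborSet x from mt hxv.mp hxw), add_zero]

lemma Walk.IsCycle.notMem_support_of_subsingleton_neighborSet {u : V} {p : G.Walk u u}
    (hp : p.IsCycle) (hv : (G.neighborSet v).Subsingleton) : v ∉ p.support := by
  intro hvp
  have htwo := hp.ncard_neighborSet_toSubgraph_eq_two hvp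
  have hsub := hv.anti (p.toSubgraph.neighborSet_subset v)
  have : Finite (p.toSubgraph.neighborSet v) := hsub.finite
  have := Set.ncard_le_one_iff_subsingleton.mpr hsub
  omega

lemma isTree_iff_induce_compl_singleton (hv : G.neighborSet v = {w}) :
    G.IsTree ↔ (G.induce {v}ᶜ).IsTree := by
  have hvw : G.Adj v w := by simp [← mem_neighborSet, hv]
  refine ⟨fun hG => ⟨(connected_iff _).mpr ⟨?_, ⟨w, hvw.ne'⟩⟩, hG.isAcyclic.induce _⟩,
    fun hH => ⟨?_, ?_⟩⟩
  · refine hG.preconnected.induce_of_degree_eq_one fun u hu => ?_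
    obtain rfl : u = v := by simpa using hu
    simp [hv]
  · have hreach : ∀ x, G.Reachable x w := by
      intro x
      by_cases hxv : x = v
      · exact hxv ▸ hvw.reachable
      · exact (hH.preconnected ⟨x, hxv⟩ ⟨w, hvw.ne'⟩).map (Embedding.induce _).toHom
    exact (connected_iff _).mpr ⟨fun x y => (hreach x).trans (hreach y).symm, ⟨w⟩⟩
  · intro u p hp
    have hsupp : ∀ x ∈ p.support, x ∈ ({v}ᶜ : Set V) := fun x hx hxv =>
      hp.notMem_support_of_subsingleton_neighborSet (hv ▸ Set.subsingleton_singleton)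
        (hxv ▸ hx)
    refine hH.isAcyclic (p.induce _ hsupp) (.of_map (f := (Embedding.induce _).toHom) ?_)
    rwa [Walk.map_induce]

end Leaf

section AttachLeaf

variable {v : V} (H : SimpleGraph ({v}ᶜ : Set V)) (w : V)

def attachLeaf : SimpleGraph V :=
  H.map (Function.Embedding.subtype _) ⊔ edge v w

lemma attachLeaf_adj {a b : V} : (attachLeaf H w).Adj a b ↔
    (∃ (ha : a ≠ v) (hb : b ≠ v), H.Adj ⟨a, ha⟩ ⟨b, hb⟩) ∨ (edge v w).Adj a b := by
  rw [attachLeaf, sup_adj, map_adj]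
  simp

@[simp]
lemma induce_attachLeaf : (attachLeaf H w).induce {v}ᶜ = H := by
  ext a b
  have ha : (a : V) ≠ v := a.2
  have hb : (b : V) ≠ v := b.2
  simp [attachLeaf_adj, edge_adj, ha, hb]

variable {H w}

lemma neighborSet_attachLeaf_self (hw : w ≠ v) : (attachLeaf H w).neighborSet v = {w} := by
  ext x
  grind [attachLeaf_adj, mem_neighborSet]

lemma attachLeaf_induce {G : SimpleGraph V} (hv : G.neighborSet v = {w}) :
    attachLeaf (G.induce {v}ᶜ) w = G := by
  have hadj : ∀ x, G.Adj v x ↔ x = w := fun x => by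
    rw [← mem_neighborSet, hv, Set.mem_singleton_iff]
  have hwv : w ≠ v := ((hadj w).mpr rfl).ne'
  ext a b
  rcases eq_or_ne a v with rfl | ha
  · grind [attachLeaf_adj]
  rcases eq_or_ne b v with rfl | hb
  · grind [attachLeaf_adj, adj_comm]
  simp [attachLeaf_adj, edge_adj, ha, hb]

end AttachLeaf

section Recursion

variable [DecidableEq V] {c : V → ℕ} {v : V}

lemma mem_treesWithDegrees_iff_induce_mem [Finite V] {G : SimpleGraph V} {w : ({v}ᶜ : Set V)}
    (hv : G.neighborSet v = {↑w}) (hcv : c v = 1) (hcw : 1 ≤ c w) :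
    G ∈ treesWithDegrees c ↔ G.induce {v}ᶜ ∈
      treesWithDegrees (Function.update (fun x : ({v}ᶜ : Set V) => c x) w (c w - 1)) := by
  have hdeg : ∀ x : ({v}ᶜ : Set V), (G.neighborSet x).ncard = c x ↔
      ((G.induce {v}ᶜ).neighborSet x).ncard =
        Function.update (fun x : ({v}ᶜ : Set V) => c x) w (c w - 1) x := by
    intro x
    rw [ncard_neighborSet_eq_ncard_neighborSet_induce_add hv x]
    rcases eq_or_ne x w with rfl | hxw
    · rw [if_pos rfl, Function.update_self]
      omega
    · rw [if_neg (Subtype.coe_ne_coe.mpr hxw), Function.update_of_ne hxw, add_zero]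
  refine and_congr (isTree_iff_induce_compl_singleton hv)
    ⟨fun h x => (hdeg x).mp (h x), fun h x => ?_⟩
  rcases eq_or_ne x v with rfl | hxv
  · rw [hv, Set.ncard_singleton, hcv]
  · exact (hdeg ⟨x, hxv⟩).mpr (h _)

lemma ncard_treesWithDegrees_eq_sum_ncard_sep [Fintype V] (hcv : c v = 1) :
    (treesWithDegrees c).ncard =
      ∑ w : ({v}ᶜ : Set V), {G ∈ treesWithDegrees c | G.neighborSet v = {↑w}}.ncard := by
  have hunion : treesWithDegrees c =
      ⋃ w : ({v}ᶜ : Set V), {G ∈ treesWithDegrees c | G.neighborSet v = {↑w}} := by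
    ext G
    simp only [Set.mem_iUnion, Set.mem_ofPred_eq]
    refine ⟨fun hG => ?_, fun ⟨_, hG, _⟩ => hG⟩
    obtain ⟨w, hw⟩ := Set.ncard_eq_one.mp ((hG.2 v).trans hcv)
    have hvw : G.Adj v w := by simp [← mem_neighborSet, hw]
    exact ⟨⟨w, hvw.ne'⟩, hG, hw⟩
  rw [← finsum_eq_sum_of_fintype, ← Set.ncard_iUnion_of_finite (fun _ => Set.toFinite _),
    ← hunion]
  intro w₁ w₂ hne
  refine Set.disjoint_left.mpr fun G h₁ h₂ => hne (Subtype.ext ?_)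
  exact Set.singleton_injective (h₁.2.symm.trans h₂.2)

theorem ncard_treesWithDegrees_eq_sum_update [Fintype V] (hcv : c v = 1) (hc : ∀ x, 1 ≤ c x) :
    (treesWithDegrees c).ncard = ∑ w : ({v}ᶜ : Set V),
      (treesWithDegrees (Function.update (fun x : ({v}ᶜ : Set V) => c x) w (c w - 1))).ncard := by
  rw [ncard_treesWithDegrees_eq_sum_ncard_sep hcv]
  refine Finset.sum_congr rfl fun w _ => ?_
  have hinj : Function.Injective fun H : SimpleGraph ({v}ᶜ : Set V) => attachLeaf H w :=
    Function.LeftInverse.injective (g := induce {v}ᶜ) fun H => induce_attachLeaf H w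
  rw [← Set.ncard_image_of_injective _ hinj]
  congr 1
  ext G
  constructor
  · rintro ⟨hG, hv⟩
    exact ⟨G.induce {v}ᶜ, (mem_treesWithDegrees_iff_induce_mem hv hcv (hc w)).mp hG,
      attachLeaf_induce hv⟩
  · rintro ⟨H, hH, rfl⟩
    have hv := neighborSet_attachLeaf_self (H := H) w.2
    exact ⟨(mem_treesWithDegrees_iff_induce_mem hv hcv (hc w)).mpr (by simpa), hv⟩

end Recursion

lemma treesWithDegrees_eq_empty [Finite V] [Nontrivial V] {c : V → ℕ} {x : V} (hx : c x = 0) :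
    treesWithDegrees c = ∅ := by
  refine Set.eq_empty_iff_forall_notMem.mpr fun G ⟨hG, hdeg⟩ => ?_
  have hempty : G.neighborSet x = ∅ := (Set.ncard_eq_zero (Set.toFinite _)).mp ((hdeg x).trans hx)
  exact hG.preconnected.not_isIsolated x (by simpa using hempty)

lemma treesWithDegrees_one_eq_singleton_top [Fintype V] (hV : Fintype.card V = 2) :
    treesWithDegrees (fun _ : V => 1) = {⊤} := by
  have hcompl : ∀ x : V, ({x}ᶜ : Set V).ncard = 1 := fun x => by
    rw [Set.ncard_compl, Set.ncard_singleton, Nat.card_eq_fintype_card, hV]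
  ext G
  simp only [treesWithDegrees, Set.mem_ofPred_eq, Set.mem_singleton_iff]
  constructor
  · rintro ⟨-, hdeg⟩
    ext x y
    have hx : G.neighborSet x = {x}ᶜ :=
      Set.eq_of_subset_of_ncard_le (fun y hy => (G.ne_of_adj hy).symm) (by rw [hcompl, hdeg])
    rw [top_adj, ← mem_neighborSet, hx, Set.mem_compl_singleton_iff, ne_comm]
  · rintro rfl
    have : Nonempty V := Fintype.card_pos_iff.mp (by omega)
    refine ⟨⟨connected_top, IsAcyclic.of_card_le_two (by simp [hV])⟩, fun x => ?_⟩
    rw [neighborSet_top, hcompl]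

lemma ncard_treesWithDegrees_update_mul_prod_factorial {W : Type*} [Fintype W] [DecidableEq W]
    {n : ℕ} (hW : Fintype.card W = n) (hn : 2 ≤ n)
    (ih : ∀ c : W → ℕ, (∀ x, 1 ≤ c x) → ∑ x, c x = 2 * n - 2 →
      (treesWithDegrees c).ncard * ∏ x, (c x - 1)! = (n - 2)!)
    {c : W → ℕ} (hc : ∀ x, 1 ≤ c x) (hsum : ∑ x, c x = 2 * n - 1) (w : W) :
    (treesWithDegrees (Function.update c w (c w - 1))).ncard * ∏ x, (c x - 1)! =
      (c w - 1) * (n - 2)! := by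
  rcases (hc w).eq_or_lt with hw | hw
  · have : Nontrivial W := Fintype.one_lt_card_iff_nontrivial.mp (by omega)
    rw [treesWithDegrees_eq_empty (x := w) (by simp [← hw]), ← hw]
    simp
  rw [prod_factorial_pred_update c hw, mul_left_comm, ih]
  · intro x
    rcases eq_or_ne x w with rfl | hxw
    · rw [Function.update_self]
      omega
    · rw [Function.update_of_ne hxw]
      exact hc x
  · have := sum_update_pred_add_one c (hc w)
    omega

theorem ncard_treesWithDegrees_mul_prod_factorial [Fintype V] [DecidableEq V]
    (hV : 2 ≤ Fintype.card V) (c : V → ℕ) (hc : ∀ v, 1 ≤ c v)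
    (hsum : ∑ v, c v = 2 * Fintype.card V - 2) :
    (treesWithDegrees c).ncard * ∏ v, (c v - 1)! = (Fintype.card V - 2)! := by
  obtain ⟨n, hn⟩ : ∃ n, Fintype.card V = n := ⟨_, rfl⟩
  rw [hn] at hV hsum ⊢
  induction n, hV using Nat.le_induction generalizing V with
  | base =>
    obtain rfl : c = fun _ => 1 := by
      have hone := (sum_eq_sum_iff_of_le (s := univ) fun x _ => hc x).mp (by simp [hsum, hn])
      exact funext fun x => (hone x (mem_univ x)).symm
    simp [treesWithDegrees_one_eq_singleton_top hn]
  | succ n hn2 ih =>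
    obtain ⟨v, hv⟩ := exists_eq_one_of_sum_lt hc (by omega)
    have hcard : Fintype.card ({v}ᶜ : Set V) = n := by
      rw [Fintype.card_compl_set, hn, Set.card_singleton]
      rfl
    have hsum' : ∑ x : ({v}ᶜ : Set V), c x = 2 * n - 1 := by
      have hsplit := Fintype.sum_eq_add_sum_subtype_ne c v
      change ∑ x : {x // x ≠ v}, c x = 2 * n - 1
      omega
    have hpred : ∑ w : ({v}ᶜ : Set V), (c w - 1) = n - 1 := by
      rw [sum_tsub_distrib (f := fun w : ({v}ᶜ : Set V) => c w) (g := fun _ => 1) univ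
        fun w _ => hc w, hsum', sum_const, card_univ, hcard, smul_eq_mul]
      omega
    calc (treesWithDegrees c).ncard * ∏ x, (c x - 1)!
        = ∑ w : ({v}ᶜ : Set V), (treesWithDegrees
            (Function.update (fun x : ({v}ᶜ : Set V) => c x) w (c w - 1))).ncard *
              ∏ x : ({v}ᶜ : Set V), (c x - 1)! := by
          rw [ncard_treesWithDegrees_eq_sum_update hv hc, sum_mul,
            Fintype.prod_eq_mul_prod_subtype_ne _ v, hv, Nat.sub_self, Nat.factorial_zero, one_mul]
          rfl
      _ = ∑ w : ({v}ᶜ : Set V), (c w - 1) * (n - 2)! :=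
          sum_congr rfl fun w _ => ncard_treesWithDegrees_update_mul_prod_factorial hcard hn2
            (ih (V := ({v}ᶜ : Set V)) · · · hcard) (fun x => hc x) hsum' w
      _ = (n + 1 - 2)! := by
          rw [← sum_mul, hpred, show n + 1 - 2 = n - 1 by omega, show n - 2 = n - 1 - 1 by omega,
            Nat.mul_factorial_pred (by omega)]

end SimpleGraph

/-- Cayley's formula with prescribed degrees: the number of labeled trees on
`{1,...,n}` in which vertex `i` has degree `c i` is `(n-2)! / ∏ (c i - 1)!`. -/
theorem cayley_degree_sequence (n : ℕ) (hn : 2 ≤ n) (c : Fin n → ℕ)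
    (hc1 : ∀ i, 1 ≤ c i) (hcsum : ∑ i, c i = 2 * n - 2) :
    {G : SimpleGraph (Fin n) | G.IsTree ∧ ∀ i, {j | G.Adj i j}.ncard = c i}.ncard
      * ∏ i, Nat.factorial (c i - 1) = Nat.factorial (n - 2) := by
  have h := SimpleGraph.ncard_treesWithDegrees_mul_prod_factorial (V := Fin n)
    (by rwa [Fintype.card_fin]) c hc1 (by rwa [Fintype.card_fin])
  rwa [Fintype.card_fin] at h
end

section
/- For every integer n ≥ 2, 2·√((4n-4)!!) · (3n-3)!/(2n-1)! ≤ (n-1)! · 3^{3n} · e^{-n} · n^n. -/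
/-!
Put `m = n - 1`, so that `(4n-4)‼ = 4^m (2m)!` and the left side is
`2^(m+1) (3m)! / ((2m+1) √((2m)!))`. Bound `(3m)!` from above by `e √k (k/e)^k`, which holds
because the Stirling sequence `k! / (√(2k) (k/e)^k)` decreases from its value `e/√2` at `k = 1`,
and bound `(2m)!` and `m!` from below by `(k/e)^k`, a single term of the series of `e^k`.
The powers of `m/e` then cancel down to `3e² m^m ≤ 27 (m+1)^(m+1)`, which holds since `e < 3`.
-/

open Nat Real

lemma div_exp_one_pow_le_factorial (k : ℕ) : ((k : ℝ) / exp 1) ^ k ≤ k ! := by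
  have h := pow_div_factorial_le_exp (k : ℝ) k.cast_nonneg k
  rw [div_le_iff₀ (by positivity), ← exp_one_pow] at h
  rw [div_pow, div_le_iff₀ (by positivity)]
  linarith

lemma factorial_le_exp_one_mul_sqrt_mul_div_exp_one_pow {k : ℕ} (hk : k ≠ 0) :
    (k ! : ℝ) ≤ exp 1 * √k * (k / exp 1) ^ k := by
  obtain ⟨j, rfl⟩ : ∃ j, k = j + 1 := ⟨k - 1, by omega⟩
  have h : Stirling.stirlingSeq (j + 1) ≤ exp 1 / √2 :=
    Stirling.stirlingSeq_one ▸ Stirling.stirlingSeq'_antitone (Nat.zero_le j)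
  rw [Stirling.stirlingSeq, div_le_div_iff₀ (by positivity) (by positivity), sqrt_mul zero_le_two]
    at h
  exact le_of_mul_le_mul_right (h.trans_eq (by ring)) (by positivity)

lemma three_mul_exp_one_mul_div_exp_one_pow_le {x : ℝ} (hx : 0 ≤ x) (m : ℕ) :
    3 * exp 1 * (x / exp 1) ^ m ≤ 27 * ((x + 1) / exp 1) ^ (m + 1) := by
  have he : 3 * exp 1 ≤ 27 / exp 1 := by
    rw [le_div_iff₀ (exp_pos 1)]
    nlinarith [exp_one_lt_three, exp_pos 1]
  have hpow : (x / exp 1) ^ m ≤ (x + 1) * ((x + 1) / exp 1) ^ m :=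
    calc (x / exp 1) ^ m ≤ ((x + 1) / exp 1) ^ m := by gcongr; linarith
      _ ≤ (x + 1) * ((x + 1) / exp 1) ^ m := le_mul_of_one_le_left (by positivity) (by linarith)
  calc 3 * exp 1 * (x / exp 1) ^ m ≤ 27 / exp 1 * ((x + 1) * ((x + 1) / exp 1) ^ m) :=
        mul_le_mul he hpow (by positivity) (by positivity)
    _ = 27 * ((x + 1) / exp 1) ^ (m + 1) := by ring

lemma two_pow_mul_div_exp_one_pow_le_sqrt_factorial (m : ℕ) :
    2 ^ m * ((m : ℝ) / exp 1) ^ m ≤ √((2 * m)! : ℝ) := by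
  rw [le_sqrt (by positivity) (by positivity)]
  calc (2 ^ m * ((m : ℝ) / exp 1) ^ m) ^ 2 = (((2 * m : ℕ) : ℝ) / exp 1) ^ (2 * m) := by
        push_cast; ring
    _ ≤ _ := div_exp_one_pow_le_factorial (2 * m)

lemma factorial_three_mul_le {m : ℕ} (hm : m ≠ 0) :
    ((3 * m)! : ℝ) ≤ exp 1 * √(3 * m) * (27 ^ m * (((m : ℝ) / exp 1) ^ m) ^ 3) :=
  calc ((3 * m)! : ℝ) ≤ exp 1 * √((3 * m : ℕ) : ℝ) * (((3 * m : ℕ) : ℝ) / exp 1) ^ (3 * m) :=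
        factorial_le_exp_one_mul_sqrt_mul_div_exp_one_pow (by omega)
    _ = _ := by
        push_cast
        rw [pow_mul, show (3 * (m : ℝ) / exp 1) ^ 3 = 27 * (m / exp 1) ^ 3 by ring, mul_pow]
        ring

lemma two_mul_two_pow_mul_factorial_three_mul_div_le {m : ℕ} (hm : m ≠ 0) :
    2 * 2 ^ m * (3 * m)! / ((2 * m + 1) * √((2 * m)! : ℝ))
      ≤ 3 * exp 1 * 27 ^ m * (((m : ℝ) / exp 1) ^ m) ^ 2 := by
  set y := ((m : ℝ) / exp 1) ^ m
  have hy : 0 < y := pow_pos (div_pos (Nat.cast_pos.2 (Nat.pos_of_ne_zero hm)) (exp_pos 1)) m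
  have h2m : 2 ^ m * y ≤ √((2 * m)! : ℝ) := two_pow_mul_div_exp_one_pow_le_sqrt_factorial m
  have h3m : ((3 * m)! : ℝ) ≤ exp 1 * √(3 * m) * (27 ^ m * y ^ 3) := factorial_three_mul_le hm
  have h3 : 2 * √(3 * m : ℝ) / (2 * m + 1) ≤ 3 := by
    rw [div_le_iff₀ (by positivity)]
    nlinarith [sq_sqrt (by positivity : (0 : ℝ) ≤ 3 * m), sq_nonneg (√(3 * m : ℝ) - 1)]
  calc 2 * 2 ^ m * (3 * m)! / ((2 * m + 1) * √((2 * m)! : ℝ))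
      ≤ 2 * 2 ^ m * (exp 1 * √(3 * m) * (27 ^ m * y ^ 3)) / ((2 * m + 1) * (2 ^ m * y)) := by
        gcongr
    _ = 2 * √(3 * m : ℝ) / (2 * m + 1) * (exp 1 * 27 ^ m * y ^ 2) := by field_simp
    _ ≤ 3 * (exp 1 * 27 ^ m * y ^ 2) := by gcongr
    _ = 3 * exp 1 * 27 ^ m * y ^ 2 := by ring

/-- `2√((4n-4)‼) (3n-3)!/(2n-1)! ≤ (n-1)! 3^{3n} e^{-n} n^n`. -/
theorem stirling_combinatorial_bound (n : ℕ) (hn : 2 ≤ n) :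
    2 * Real.sqrt ((4 * n - 4)‼) * (Nat.factorial (3 * n - 3)) / (Nat.factorial (2 * n - 1))
      ≤ (Nat.factorial (n - 1)) * 3 ^ (3 * n) * Real.exp (-(n : ℝ)) * (n : ℝ) ^ n := by
  obtain ⟨m, rfl⟩ : ∃ m, n = m + 1 := ⟨n - 1, by omega⟩
  rw [show 4 * (m + 1) - 4 = 2 * (2 * m) by omega, show 3 * (m + 1) - 3 = 3 * m by omega,
    show 2 * (m + 1) - 1 = 2 * m + 1 by omega, Nat.add_sub_cancel, doubleFactorial_two_mul,
    factorial_succ]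
  push_cast
  calc 2 * √(2 ^ (2 * m) * (2 * m)!) * (3 * m)! / ((2 * m + 1) * (2 * m)!)
      = 2 * 2 ^ m * (3 * m)! / ((2 * m + 1) * √((2 * m)! : ℝ)) := by
        rw [sqrt_mul (by positivity), pow_mul', sqrt_sq (by positivity)]
        field_simp
        exact sq_sqrt (by positivity)
    _ ≤ 27 ^ m * ((m : ℝ) / exp 1) ^ m * (3 * exp 1 * ((m : ℝ) / exp 1) ^ m) := by
        refine (two_mul_two_pow_mul_factorial_three_mul_div_le (by omega)).trans_eq ?_
        ring
    _ ≤ 27 ^ m * m ! * (27 * ((m + 1) / exp 1) ^ (m + 1)) := by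
        gcongr 27 ^ m * ?_ * ?_
        · exact div_exp_one_pow_le_factorial m
        · exact three_mul_exp_one_mul_div_exp_one_pow_le m.cast_nonneg m
    _ = m ! * 3 ^ (3 * (m + 1)) * exp (-(m + 1)) * (m + 1) ^ (m + 1) := by
        rw [exp_neg, pow_mul, div_pow, show (m : ℝ) + 1 = ((m + 1 : ℕ) : ℝ) by push_cast; ring,
          ← exp_one_pow]
        ring
end
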